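/- For any connected graph G on n vertices, md(G) \leq n - 1, with equality if and only if G is a tree. -/

import Mathlib

/-!
Fix a spanning tree `T` of `G`. A monochromatic cut separating the ends of an edge `uv` contains
`uv` and some edge of the `T`-path from `u` to `v`, so every color already occurs on `T`, which has
`n - 1` edges. If `n - 1` colors occur, the coloring is injective on `T`. A non-tree edge `uv` then
closes a cycle with the `T`-path from `u` to `v`; the cut separating the ends of a path edge `t`
meets this cycle in `t` only, unless it contains `uv`, and a cycle meeting a cut in a single edge
does not separate the ends of that edge. Hence every path edge has the color of `uv`, against
injectivity, as the path has at least two edges. Conversely, every edge of a tree is a bridge, so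
every coloring of a tree, in particular an injective one, is a monochromatic disconnection
coloring.
-/

open SimpleGraph

/-- An edge-coloring `Γ` is a monochromatic disconnection coloring (MD-coloring) of `G`
if every pair of distinct vertices is separated by a monochromatic edge-cut. -/
def IsMDColoring {V : Type*} (G : SimpleGraph V) (Γ : Sym2 V → ℕ) : Prop :=
  ∀ u v : V, u ≠ v → ∃ (c : ℕ) (F : Set (Sym2 V)), F ⊆ G.edgeSet ∧
    (∀ e ∈ F, Γ e = c) ∧ ¬ (G.deleteEdges F).Reachable u v

/-- The monochromatic disconnection number of `G`: the maximum number of colors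
used by an MD-coloring of `G`. -/
noncomputable def md {V : Type*} (G : SimpleGraph V) : ℕ :=
  sSup {n : ℕ | ∃ Γ : Sym2 V → ℕ, IsMDColoring G Γ ∧ (Γ '' G.edgeSet).ncard = n}

namespace SimpleGraph

variable {V : Type*} {G T : SimpleGraph V} {F : Set (Sym2 V)} {u v x y : V}

theorem mem_of_not_reachable_deleteEdges (huv : G.Adj u v)
    (h : ¬(G.deleteEdges F).Reachable u v) : s(u, v) ∈ F := by
  by_contra hF
  exact h (deleteEdges_adj.mpr ⟨huv, hF⟩).reachable

theorem Walk.IsCycle.reachable_deleteEdges {w : V} {c : G.Walk w w} (hc : c.IsCycle)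
    (hxy : s(x, y) ∈ c.edges) (hF : ∀ e ∈ c.edges, e ∈ F → e = s(x, y)) :
    (G.deleteEdges F).Reachable x y := by
  -- After deleting only `F \ {s(x, y)}` the cycle survives, so `s(x, y)` is not a bridge.
  set H := G.deleteEdges (F \ {s(x, y)})
  have hcH : ∀ e ∈ c.edges, e ∉ F \ {s(x, y)} := fun e he ⟨heF, hne⟩ => hne (hF e he heF)
  have hxyH : H.Adj x y ∧ (H.deleteEdges {s(x, y)}).Reachable x y :=
    adj_and_reachable_delete_edges_iff_exists_cycle.mpr
      ⟨w, c.toDeleteEdges _ hcH, hc.transfer _, by rwa [Walk.edges_transfer]⟩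
  refine hxyH.2.mono ?_
  rw [deleteEdges_deleteEdges]
  exact deleteEdges_anti (by simp)

theorem exists_isCycle_of_adj_of_reachable (hTG : T ≤ G) (huv : G.Adj u v) (hT : ¬T.Adj u v)
    (hvu : T.Reachable v u) :
    ∃ c : G.Walk u u, c.IsCycle ∧ s(u, v) ∈ c.edges ∧
      ∀ e ∈ c.edges, e ≠ s(u, v) → e ∈ T.edgeSet := by
  obtain ⟨p, hp⟩ := hvu.exists_isPath
  refine ⟨.cons huv (p.mapLe hTG), ?_, by simp, ?_⟩
  · refine (Walk.cons_isCycle_iff _ huv).mpr ⟨hp.mapLe hTG, fun h => hT ?_⟩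
    rw [Walk.edges_mapLe_eq_edges] at h
    exact p.edges_subset_edgeSet h
  · simp only [Walk.edges_cons, List.mem_cons, Walk.edges_mapLe_eq_edges]
    rintro e (rfl | he) hne
    · exact absurd rfl hne
    · exact p.edges_subset_edgeSet he

theorem IsTree.ncard_edgeSet [Fintype V] (hT : T.IsTree) :
    T.edgeSet.ncard = Fintype.card V - 1 := by
  classical
  have := hT.card_edgeFinset
  rw [← coe_edgeFinset, Set.ncard_coe_finset]
  omega

end SimpleGraph

namespace IsMDColoring

variable {V : Type*} {G T : SimpleGraph V} {Γ : Sym2 V → ℕ}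

theorem image_edgeSet_subset (hΓ : IsMDColoring G Γ) (hTG : T ≤ G) (hT : T.Preconnected) :
    Γ '' G.edgeSet ⊆ Γ '' T.edgeSet := by
  rintro _ ⟨e, he, rfl⟩
  cases e with | h u v =>
  have huv : G.Adj u v := he
  obtain ⟨c, F, -, hmono, hsep⟩ := hΓ u v huv.ne
  obtain ⟨p⟩ := hT u v
  obtain ⟨t, htF, htp⟩ := (p.mapLe hTG).exists_mem_edges_of_not_reachable_deleteEdges hsep
  rw [Walk.edges_mapLe_eq_edges] at htp
  exact ⟨t, p.edges_subset_edgeSet htp,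
    (hmono t htF).trans (hmono _ (mem_of_not_reachable_deleteEdges huv hsep)).symm⟩

theorem apply_eq_of_isCycle (hΓ : IsMDColoring G Γ) {S : Set (Sym2 V)} (hS : Set.InjOn Γ S)
    {w : V} {c : G.Walk w w} (hc : c.IsCycle) {e₀ t : Sym2 V}
    (hcS : ∀ e ∈ c.edges, e ≠ e₀ → e ∈ S) (ht : t ∈ c.edges) (hte : t ≠ e₀) :
    Γ t = Γ e₀ := by
  cases t with | h x y =>
  have hxy : G.Adj x y := c.adj_of_mem_edges ht
  obtain ⟨col, F, -, hmono, hsep⟩ := hΓ x y hxy.ne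
  have htF := mem_of_not_reachable_deleteEdges hxy hsep
  by_contra hne
  have he₀ : e₀ ∉ F := fun h => hne ((hmono _ htF).trans (hmono _ h).symm)
  refine hsep (hc.reachable_deleteEdges ht fun e he heF => ?_)
  have hne₀ : e ≠ e₀ := by rintro rfl; exact he₀ heF
  exact hS (hcS e he hne₀) (hcS _ ht hte) ((hmono e heF).trans (hmono _ htF).symm)

theorem not_injOn_of_isCycle (hΓ : IsMDColoring G Γ) {S : Set (Sym2 V)} {w : V}
    {c : G.Walk w w} (hc : c.IsCycle) (e₀ : Sym2 V) (hcS : ∀ e ∈ c.edges, e ≠ e₀ → e ∈ S) :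
    ¬Set.InjOn Γ S := by
  classical
  intro hS
  have hcard : (c.edges.toFinset.erase e₀).card ≤ 1 := Finset.card_le_one.mpr fun a ha b hb => by
    simp only [Finset.mem_erase, List.mem_toFinset] at ha hb
    exact hS (hcS a ha.2 ha.1) (hcS b hb.2 hb.1)
      ((hΓ.apply_eq_of_isCycle hS hc hcS ha.2 ha.1).trans
        (hΓ.apply_eq_of_isCycle hS hc hcS hb.2 hb.1).symm)
  have herase := Finset.pred_card_le_card_erase (s := c.edges.toFinset) (a := e₀)
  rw [List.toFinset_card_of_nodup hc.edges_nodup, c.length_edges] at herase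
  have := hc.three_le_length
  omega

theorem eq_of_injOn (hΓ : IsMDColoring G Γ) (hTG : T ≤ G) (hT : T.Preconnected)
    (hinj : Set.InjOn Γ T.edgeSet) : G = T := by
  refine le_antisymm (edgeSet_subset_edgeSet.mp fun e he => ?_) hTG
  cases e with | h u v =>
  by_contra huvT
  obtain ⟨c, hc, -, hcT⟩ := exists_isCycle_of_adj_of_reachable hTG he huvT (hT v u)
  exact hΓ.not_injOn_of_isCycle hc _ hcT hinj

theorem ncard_image_le [Fintype V] (hΓ : IsMDColoring G Γ) (hG : G.Connected) :
    (Γ '' G.edgeSet).ncard ≤ Fintype.card V - 1 := by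
  obtain ⟨T, hTG, hT⟩ := hG.exists_isTree_le
  calc (Γ '' G.edgeSet).ncard
      ≤ (Γ '' T.edgeSet).ncard :=
        Set.ncard_le_ncard (hΓ.image_edgeSet_subset hTG hT.connected.preconnected)
    _ ≤ T.edgeSet.ncard := Set.ncard_image_le
    _ = Fintype.card V - 1 := hT.ncard_edgeSet

theorem isTree_of_ncard_image_eq [Fintype V] (hΓ : IsMDColoring G Γ) (hG : G.Connected)
    (h : (Γ '' G.edgeSet).ncard = Fintype.card V - 1) : G.IsTree := by
  obtain ⟨T, hTG, hT⟩ := hG.exists_isTree_le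
  have hsub := hΓ.image_edgeSet_subset hTG hT.connected.preconnected
  have hinj : Set.InjOn Γ T.edgeSet := Set.injOn_of_ncard_image_eq <|
    le_antisymm Set.ncard_image_le (by rw [hT.ncard_edgeSet, ← h]; exact Set.ncard_le_ncard hsub)
  rwa [hΓ.eq_of_injOn hTG hT.connected.preconnected hinj]

end IsMDColoring

section

variable {V : Type*} {G : SimpleGraph V}

theorem isMDColoring_const (G : SimpleGraph V) (c : ℕ) : IsMDColoring G fun _ => c := by
  intro u v huv
  refine ⟨c, G.edgeSet, subset_rfl, fun _ _ => rfl, ?_⟩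
  rw [deleteEdges_edgeSet, sdiff_self]
  exact fun h => huv (reachable_bot.mp h)

theorem isMDColoring_of_isAcyclic (hG : G.IsAcyclic) (Γ : Sym2 V → ℕ) : IsMDColoring G Γ := by
  intro u v huv
  by_cases hr : G.Reachable u v
  swap
  · exact ⟨0, ∅, Set.empty_subset _, by simp, by rwa [deleteEdges_empty]⟩
  obtain ⟨p, hp⟩ := hr.exists_isPath
  cases p with
  | nil => exact absurd rfl huv
  | @cons _ b _ hub q =>
    refine ⟨Γ s(u, b), {s(u, b)}, by simpa using hub, by simp, fun hreach => ?_⟩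
    have hqv : (G.deleteEdges {s(u, b)}).Reachable b v :=
      reachable_deleteEdges_iff_exists_walk.mpr ⟨q, fun h =>
        ((Walk.cons_isPath_iff hub q).mp hp).2 (q.fst_mem_support_of_mem_edges h)⟩
    exact isBridge_iff.mp (isAcyclic_iff_forall_adj_isBridge.mp hG hub) (hreach.trans hqv.symm)

theorem md_le {k : ℕ} (h : ∀ Γ, IsMDColoring G Γ → (Γ '' G.edgeSet).ncard ≤ k) : md G ≤ k :=
  csSup_le' (by rintro _ ⟨Γ, hΓ, rfl⟩; exact h Γ hΓ)

theorem bddAbove_ncard_image {k : ℕ}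
    (h : ∀ Γ, IsMDColoring G Γ → (Γ '' G.edgeSet).ncard ≤ k) :
    BddAbove {n : ℕ | ∃ Γ : Sym2 V → ℕ, IsMDColoring G Γ ∧ (Γ '' G.edgeSet).ncard = n} :=
  ⟨k, by rintro _ ⟨Γ, hΓ, rfl⟩; exact h Γ hΓ⟩

theorem le_md {k : ℕ} (h : ∀ Γ, IsMDColoring G Γ → (Γ '' G.edgeSet).ncard ≤ k)
    {Γ : Sym2 V → ℕ} (hΓ : IsMDColoring G Γ) : (Γ '' G.edgeSet).ncard ≤ md G :=
  le_csSup (bddAbove_ncard_image h) ⟨Γ, hΓ, rfl⟩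

theorem exists_isMDColoring_ncard_image_eq_md {k : ℕ}
    (h : ∀ Γ, IsMDColoring G Γ → (Γ '' G.edgeSet).ncard ≤ k) :
    ∃ Γ, IsMDColoring G Γ ∧ (Γ '' G.edgeSet).ncard = md G :=
  Nat.sSup_mem (by exact ⟨_, _, isMDColoring_const G 0, rfl⟩) (bddAbove_ncard_image h)

end

theorem stmt_9 {V : Type*} [Fintype V] (G : SimpleGraph V) (hG : G.Connected) :
    md G ≤ Fintype.card V - 1 ∧ (md G = Fintype.card V - 1 ↔ G.IsTree) := by
  have hbound : ∀ Γ, IsMDColoring G Γ → (Γ '' G.edgeSet).ncard ≤ Fintype.card V - 1 :=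
    fun Γ hΓ => hΓ.ncard_image_le hG
  refine ⟨md_le hbound, fun h => ?_, fun hT => (md_le hbound).antisymm ?_⟩
  · obtain ⟨Γ, hΓ, hcard⟩ := exists_isMDColoring_ncard_image_eq_md hbound
    exact hΓ.isTree_of_ncard_image_eq hG (hcard.trans h)
  · obtain ⟨f, hf⟩ := Countable.exists_injective_nat (Sym2 V)
    have hf_colors := le_md hbound (isMDColoring_of_isAcyclic hT.isAcyclic f)
    rwa [Set.ncard_image_of_injective _ hf, hT.ncard_edgeSet] at hf_colors
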